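/- Let a > √3 and c(a) = (9/8)(a + 1/a). The point (0, 0, -c(a)/3) is an equilibrium of the system Ṁ₁ = -(1/a)M₂M₃ - (3/2)M₂, Ṁ₂ = a M₁M₃ + (3/2)M₁, Ṁ₃ = (1/a - a)M₁M₂, and every solution M : ℝ → ℝ³ of this system whose initial value satisfies a M₁(0)² + (1/a)M₂(0)² - 3M₃(0) - c(a) = 0 and M₁(0)² + M₂(0)² + M₃(0)² = c(a)²/9 and M(0) ≠ (0, 0, -c(a)/3) is not periodic, i.e. there is no T > 0 with M(t+T) = M(t) for all t ∈ ℝ. -/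

import Mathlib

open Real Function Set

/-!
Along a solution the Hamiltonian and the Casimir are conserved, so the two level conditions hold
at all times. On this level, writing `u = M₃ + c/3`, `b = 3a - 2c/3` and `B = 2a²c/3 - 3a`,
one has `(a² - 1) M₁² = u (b + u)` and `(a² - 1) M₂² = u (B - a² u)`. For `a > √3` both `b` and
`B` are positive, hence `0 ≤ u ≤ B / a²`, `u = 0` only at the equilibrium, and `|u'| ≤ K u`.

A periodic `u` attains its minimum. If the minimum is `0`, Grönwall's inequality forces `u ≡ 0`,
so the solution is the equilibrium. If it is positive, `u' = 0` there forces `M₂ = 0`, i.e.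
`u = B / a²`, which is also the maximum of `u`. Then `u` is constant, `M₂ ≡ 0`, and `M₂' = 0`
gives `a M₃ = -3/2`, which on this level happens only for `a² = 3`.
-/

theorem Function.Periodic.exists_forall_le {α : Type*} [TopologicalSpace α] [LinearOrder α]
    [ClosedIicTopology α] {f : ℝ → α} {T : ℝ} (hp : Periodic f T) (hT : T ≠ 0)
    (hf : Continuous f) : ∃ t₀, ∀ t, f t₀ ≤ f t := by
  obtain ⟨_, ⟨t₀, rfl⟩, hmin⟩ :=
    (hp.compact_of_continuous hT hf).exists_isLeast (range_nonempty f)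
  exact ⟨t₀, fun t => hmin ⟨t, rfl⟩⟩

theorem Function.Periodic.eq_zero_of_abs_deriv_le_mul_abs_self {f f' : ℝ → ℝ} {T K t₀ : ℝ}
    (hp : Periodic f T) (hT : 0 < T) (hf : ∀ t, HasDerivAt f (f' t) t)
    (bound : ∀ t, |f' t| ≤ K * |f t|) (h₀ : f t₀ = 0) (t : ℝ) : f t = 0 := by
  obtain ⟨n, hn⟩ := exists_nat_gt ((t₀ - t) / T)
  have hle : t₀ - n * T ≤ t := by rw [div_lt_iff₀ hT] at hn; linarith
  exact eq_zero_of_abs_deriv_le_mul_abs_self_of_eq_zero_right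
    (fun s _ => (hf s).continuousAt.continuousWithinAt) (fun s _ => (hf s).hasDerivWithinAt)
    ((hp.sub_nat_mul_eq n).trans h₀) (fun s _ => bound s) t ⟨hle, le_rfl⟩

theorem eq_of_forall_hasDerivAt_zero {f : ℝ → ℝ} (hf : ∀ t, HasDerivAt f 0 t) (t s : ℝ) :
    f t = f s :=
  is_const_of_deriv_eq_zero (fun t => (hf t).differentiableAt) (fun t => (hf t).deriv) t s

def IsLiePoissonSolution (a : ℝ) (M₁ M₂ M₃ : ℝ → ℝ) : Prop :=
  (∀ t, HasDerivAt M₁ (-(1 / a) * M₂ t * M₃ t - 3 / 2 * M₂ t) t) ∧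
  (∀ t, HasDerivAt M₂ (a * M₁ t * M₃ t + 3 / 2 * M₁ t) t) ∧
  (∀ t, HasDerivAt M₃ ((1 / a - a) * M₁ t * M₂ t) t)

/-- The intersection of the paraboloid `2H = 0` with the sphere of the Casimir at level `c² / 9`. -/
def OnLevel (a c x y z : ℝ) : Prop :=
  a * x ^ 2 + 1 / a * y ^ 2 - 3 * z - c = 0 ∧ x ^ 2 + y ^ 2 + z ^ 2 = c ^ 2 / 9

namespace OnLevel

variable {a c x y z : ℝ}

theorem sq_mul_add_sq (ha : a ≠ 0) (h : OnLevel a c x y z) :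
    a ^ 2 * x ^ 2 + y ^ 2 = 3 * a * z + a * c := by
  have hinv : a * (1 / a) = 1 := by field_simp
  linear_combination a * h.1 - y ^ 2 * hinv

theorem sub_one_mul_fst_sq (ha : a ≠ 0) (h : OnLevel a c x y z) :
    (a ^ 2 - 1) * x ^ 2 = (z + c / 3) * (3 * a - 2 * c / 3 + (z + c / 3)) := by
  linear_combination h.sq_mul_add_sq ha - h.2

theorem sub_one_mul_snd_sq (ha : a ≠ 0) (h : OnLevel a c x y z) :
    (a ^ 2 - 1) * y ^ 2 = (z + c / 3) * (2 * a ^ 2 * c / 3 - 3 * a - a ^ 2 * (z + c / 3)) := by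
  linear_combination a ^ 2 * h.2 - h.sq_mul_add_sq ha

theorem nonneg_and_le (ha : 1 < a ^ 2) (hB : 0 < 2 * a ^ 2 * c / 3 - 3 * a)
    (h : OnLevel a c x y z) :
    0 ≤ z + c / 3 ∧ a ^ 2 * (z + c / 3) ≤ 2 * a ^ 2 * c / 3 - 3 * a := by
  have hy := h.sub_one_mul_snd_sq (by rintro rfl; norm_num at ha)
  have hy0 : 0 ≤ (z + c / 3) * (2 * a ^ 2 * c / 3 - 3 * a - a ^ 2 * (z + c / 3)) :=
    hy ▸ mul_nonneg (by linarith) (sq_nonneg y)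
  constructor
  · by_contra! hneg
    nlinarith [sq_nonneg (a * (z + c / 3))]
  · by_contra! hgt
    nlinarith [mul_pos (hB.trans hgt) (sub_pos.2 hgt), mul_nonneg (sq_nonneg a) hy0]

theorem fst_eq_zero_and_snd_eq_zero (ha : 1 < a ^ 2) (h : OnLevel a c x y z)
    (hu : z + c / 3 = 0) : x = 0 ∧ y = 0 := by
  have ha0 : a ≠ 0 := by rintro rfl; norm_num at ha
  have hx := h.sub_one_mul_fst_sq ha0
  have hy := h.sub_one_mul_snd_sq ha0
  rw [hu, zero_mul] at hx hy
  constructor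
  · simpa [(sub_pos.2 ha).ne'] using hx
  · simpa [(sub_pos.2 ha).ne'] using hy

theorem fst_ne_zero (ha : 1 < a ^ 2) (hb : 0 ≤ 3 * a - 2 * c / 3) (h : OnLevel a c x y z)
    (hu : 0 < z + c / 3) : x ≠ 0 := by
  rintro rfl
  have hx := h.sub_one_mul_fst_sq (by rintro rfl; norm_num at ha)
  nlinarith

theorem abs_mul_le (ha : 0 < a) (ha1 : 1 < a ^ 2) (hb : 0 ≤ 3 * a - 2 * c / 3)
    (hB : 0 < 2 * a ^ 2 * c / 3 - 3 * a) (h : OnLevel a c x y z) :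
    |(1 / a - a) * x * y| ≤
      (3 * a - 2 * c / 3 + (2 * a ^ 2 * c / 3 - 3 * a)) / a * |z + c / 3| := by
  obtain ⟨hu, huB⟩ := h.nonneg_and_le ha1 hB
  have hx := h.sub_one_mul_fst_sq ha.ne'
  have hy := h.sub_one_mul_snd_sq ha.ne'
  set u := z + c / 3
  set b := 3 * a - 2 * c / 3
  set B := 2 * a ^ 2 * c / 3 - 3 * a
  have hprod : (a * ((1 / a - a) * x * y)) ^ 2 = (a ^ 2 - 1) * x ^ 2 * ((a ^ 2 - 1) * y ^ 2) := by
    field_simp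
    ring
  have hfac : (b + u) * (B - a ^ 2 * u) ≤ (b + B) * (b + B) :=
    mul_le_mul (by nlinarith) (by nlinarith) (by nlinarith) (by linarith)
  have hsq : (a * ((1 / a - a) * x * y)) ^ 2 ≤ ((b + B) * u) ^ 2 := by
    rw [hprod, hx, hy]
    nlinarith [mul_le_mul_of_nonneg_left hfac (sq_nonneg u)]
  have habs := sq_le_sq.1 hsq
  rw [abs_mul a, abs_mul (b + B), abs_of_pos ha, abs_of_pos (by linarith : 0 < b + B)] at habs
  rw [div_mul_eq_mul_div, le_div_iff₀ ha]
  linarith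

end OnLevel

namespace IsLiePoissonSolution

variable {a c : ℝ} {M₁ M₂ M₃ : ℝ → ℝ}

theorem hamiltonian_eq (hM : IsLiePoissonSolution a M₁ M₂ M₃) (t : ℝ) :
    a * M₁ t ^ 2 + 1 / a * M₂ t ^ 2 - 3 * M₃ t = a * M₁ 0 ^ 2 + 1 / a * M₂ 0 ^ 2 - 3 * M₃ 0 := by
  obtain ⟨h₁, h₂, h₃⟩ := hM
  refine eq_of_forall_hasDerivAt_zero
    (f := fun s => a * M₁ s ^ 2 + 1 / a * M₂ s ^ 2 - 3 * M₃ s) (fun s => ?_) t 0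
  exact ((((h₁ s).pow 2).const_mul a).add (((h₂ s).pow 2).const_mul (1 / a))).sub
    ((h₃ s).const_mul 3) |>.congr_deriv (by ring)

theorem casimir_eq (hM : IsLiePoissonSolution a M₁ M₂ M₃) (t : ℝ) :
    M₁ t ^ 2 + M₂ t ^ 2 + M₃ t ^ 2 = M₁ 0 ^ 2 + M₂ 0 ^ 2 + M₃ 0 ^ 2 := by
  obtain ⟨h₁, h₂, h₃⟩ := hM
  refine eq_of_forall_hasDerivAt_zero
    (f := fun s => M₁ s ^ 2 + M₂ s ^ 2 + M₃ s ^ 2) (fun s => ?_) t 0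
  exact (((h₁ s).pow 2).add ((h₂ s).pow 2)).add ((h₃ s).pow 2) |>.congr_deriv (by ring)

theorem onLevel (hM : IsLiePoissonSolution a M₁ M₂ M₃) (h₀ : OnLevel a c (M₁ 0) (M₂ 0) (M₃ 0))
    (t : ℝ) : OnLevel a c (M₁ t) (M₂ t) (M₃ t) :=
  ⟨by linarith [hM.hamiltonian_eq t, h₀.1], by linarith [hM.casimir_eq t, h₀.2]⟩

theorem fst_mul_eq_zero_of_snd_eq_zero (hM : IsLiePoissonSolution a M₁ M₂ M₃)
    (h : ∀ t, M₂ t = 0) (t : ℝ) : M₁ t * (a * M₃ t + 3 / 2) = 0 := by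
  have hz : HasDerivAt M₂ 0 t := by rw [funext h]; exact hasDerivAt_const _ _
  linear_combination (hM.2.1 t).unique hz

theorem mul_eq_nine_div_two_of_forall_le (hM : IsLiePoissonSolution a M₁ M₂ M₃)
    (hlev : ∀ t, OnLevel a c (M₁ t) (M₂ t) (M₃ t)) (ha : 0 < a) (ha1 : 1 < a ^ 2)
    (hb : 0 ≤ 3 * a - 2 * c / 3) (hB : 0 < 2 * a ^ 2 * c / 3 - 3 * a) {t₀ : ℝ}
    (hmin : ∀ t, M₃ t₀ ≤ M₃ t) (hpos : 0 < M₃ t₀ + c / 3) : a * c = 9 / 2 := by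
  have hcrit : (1 / a - a) * M₁ t₀ * M₂ t₀ = 0 :=
    IsLocalMin.hasDerivAt_eq_zero (Filter.Eventually.of_forall hmin) (hM.2.2 t₀)
  have hcoef : 1 / a - a ≠ 0 := by
    intro h
    field_simp at h
    nlinarith
  have hM₂t₀ : M₂ t₀ = 0 :=
    (mul_eq_zero.1 hcrit).resolve_left (mul_ne_zero hcoef ((hlev t₀).fst_ne_zero ha1 hb hpos))
  have hmax : a ^ 2 * (M₃ t₀ + c / 3) = 2 * a ^ 2 * c / 3 - 3 * a := by
    have hy := (hlev t₀).sub_one_mul_snd_sq ha.ne'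
    rw [hM₂t₀] at hy
    nlinarith
  have hM₂ : ∀ t, M₂ t = 0 := by
    intro t
    have hy := (hlev t).sub_one_mul_snd_sq ha.ne'
    have hmax_t : a ^ 2 * (M₃ t + c / 3) = 2 * a ^ 2 * c / 3 - 3 * a :=
      le_antisymm ((hlev t).nonneg_and_le ha1 hB).2 (by nlinarith [hmin t])
    rw [hmax_t, sub_self, mul_zero] at hy
    simpa [(sub_pos.2 ha1).ne'] using hy
  have hM₃ : a * M₃ t₀ + 3 / 2 = 0 :=
    (mul_eq_zero.1 (hM.fst_mul_eq_zero_of_snd_eq_zero hM₂ t₀)).resolve_left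
      ((hlev t₀).fst_ne_zero ha1 hb hpos)
  exact mul_left_cancel₀ ha.ne' (by linear_combination -3 * hmax + 3 * a * hM₃)

end IsLiePoissonSolution

theorem stmt_1 (a : ℝ) (ha : Real.sqrt 3 < a) (c : ℝ) (hc : c = 9 / 8 * (a + 1 / a)) :
    (fun p : ℝ × ℝ × ℝ =>
        (-(1 / a) * p.2.1 * p.2.2 - 3 / 2 * p.2.1,
          a * p.1 * p.2.2 + 3 / 2 * p.1,
          (1 / a - a) * p.1 * p.2.1)) (0, 0, -c / 3) = (0, 0, 0) ∧
    ∀ M₁ M₂ M₃ : ℝ → ℝ,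
      (∀ t, HasDerivAt M₁ (-(1 / a) * M₂ t * M₃ t - 3 / 2 * M₂ t) t) →
      (∀ t, HasDerivAt M₂ (a * M₁ t * M₃ t + 3 / 2 * M₁ t) t) →
      (∀ t, HasDerivAt M₃ ((1 / a - a) * M₁ t * M₂ t) t) →
      a * M₁ 0 ^ 2 + (1 / a) * M₂ 0 ^ 2 - 3 * M₃ 0 - c = 0 →
      M₁ 0 ^ 2 + M₂ 0 ^ 2 + M₃ 0 ^ 2 = c ^ 2 / 9 →
      (M₁ 0, M₂ 0, M₃ 0) ≠ (0, 0, -c / 3) →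
      ¬ ∃ T : ℝ, 0 < T ∧ ∀ t : ℝ,
        (M₁ (t + T), M₂ (t + T), M₃ (t + T)) = (M₁ t, M₂ t, M₃ t) := by
  have ha0 : 0 < a := (sqrt_nonneg 3).trans_lt ha
  have ha3 : 3 < a ^ 2 := (sqrt_lt' ha0).1 ha
  have hac : 8 * a * c = 9 * a ^ 2 + 9 := by rw [hc]; field_simp
  have hb : 0 ≤ 3 * a - 2 * c / 3 := (mul_nonneg_iff_of_pos_left ha0).1 (by nlinarith)
  have hB : 0 < 2 * a ^ 2 * c / 3 - 3 * a := by nlinarith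
  refine ⟨by simp, ?_⟩
  rintro M₁ M₂ M₃ h₁ h₂ h₃ hH hK hne ⟨T, hT, hper⟩
  have hM : IsLiePoissonSolution a M₁ M₂ M₃ := ⟨h₁, h₂, h₃⟩
  have hlev := hM.onLevel ⟨hH, hK⟩
  have hp : Periodic M₃ T := fun t => congrArg (·.2.2) (hper t)
  obtain ⟨t₀, ht₀⟩ := hp.exists_forall_le hT.ne' (continuous_iff_continuousAt.2 fun t =>
    (h₃ t).continuousAt)
  rcases ((hlev t₀).nonneg_and_le (by linarith) hB).1.eq_or_lt with hzero | hpos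
  · have hu0 : M₃ 0 + c / 3 = 0 := (hp.comp (· + c / 3)).eq_zero_of_abs_deriv_le_mul_abs_self hT
      (fun t => (h₃ t).add_const _) (fun t => (hlev t).abs_mul_le ha0 (by linarith) hb hB)
      hzero.symm 0
    obtain ⟨hx, hy⟩ := (hlev 0).fst_eq_zero_and_snd_eq_zero (by linarith) hu0
    exact hne (by simp only [hx, hy, Prod.mk.injEq, true_and]; linarith)
  · have := hM.mul_eq_nine_div_two_of_forall_le hlev ha0 (by linarith) hb hB ht₀ hpos
    nlinarith
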